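/- arXiv:2203.00825 — 2 statements merged into one kernel-verified Lean document; each statement's English description precedes it below -/
import Mathlib

section
/- Let q_o > q_s > 0, N > 0, δ ∈ (0,1), and define R1b(p_o, p_r) = N·δ·p_r·((p_o−p_r)/(q_o−q_s) − p_r/q_s) + N·p_o·(1 − (p_o−p_r)/(q_o−q_s)). If (δ+1)²·q_s < 4·δ·q_o, then R1b is concave in (p_o, p_r). -/
/-- If `(δ+1)²·q_s < 4·δ·q_o` (with `q_o > q_s > 0`, `N > 0`, `δ ∈ (0,1)`), then the
region-R1b revenue `R1b(p_o, p_r)` is concave in `(p_o, p_r)`. -/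
theorem R1b_concave (q_s q_o N δ : ℝ)
    (hq : q_o > q_s) (hqs : q_s > 0) (hN : N > 0) (hδ : δ ∈ Set.Ioo (0:ℝ) 1)
    (hc : (δ + 1) ^ 2 * q_s < 4 * δ * q_o) :
    ConcaveOn ℝ Set.univ (fun p : ℝ × ℝ =>
      N * δ * p.2 * ((p.1 - p.2) / (q_o - q_s) - p.2 / q_s)
        + N * p.1 * (1 - (p.1 - p.2) / (q_o - q_s))) := by
  obtain ⟨hδ0, hδ1⟩ := hδ
  have hd : q_o - q_s > 0 := by linarith
  refine ⟨convex_univ, ?_⟩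
  rintro ⟨x1, x2⟩ - ⟨y1, y2⟩ - a b ha hb hab
  simp only [Prod.smul_mk, Prod.mk_add_mk, smul_eq_mul, div_eq_mul_inv]
  set u := (q_o - q_s)⁻¹ with hu_def
  set v := q_s⁻¹ with hv_def
  have hu : (q_o - q_s) * u = 1 := mul_inv_cancel₀ (ne_of_gt hd)
  have hv : q_s * v = 1 := mul_inv_cancel₀ (ne_of_gt hqs)
  have hupos : 0 < u := inv_pos.mpr hd
  have hvpos : 0 < v := inv_pos.mpr hqs
  have hb' : b = 1 - a := by linarith
  subst hb'
  -- key: 4δ(u+v) ≥ (1+δ)² u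
  have key : (δ + 1) ^ 2 * u ≤ 4 * δ * (u + v) := by
    have h1 : (4 * δ * q_o - (δ + 1) ^ 2 * q_s) * (u * v) ≥ 0 := by
      apply mul_nonneg (by linarith) (le_of_lt (mul_pos hupos hvpos))
    nlinarith [hu, hv, mul_pos hupos hvpos]
  have ha' : 0 ≤ 1 - a := by linarith
  nlinarith [mul_nonneg (mul_nonneg (mul_nonneg (le_of_lt hN) ha) ha')
      (mul_nonneg (le_of_lt hupos)
        (sq_nonneg (2 * (x1 - y1) - (δ + 1) * (x2 - y2)))),
    mul_nonneg (mul_nonneg (mul_nonneg (le_of_lt hN) ha) ha')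
      (mul_nonneg (sub_nonneg.mpr key) (sq_nonneg (x2 - y2)))]
end

section
/- Under the condition (δ+1)²·q_s < 4·δ·q_o with q_o > q_s > 0 and δ ∈ (0,1), the unique stationary point of R1b(p_o, p_r) = N·δ·p_r·((p_o−p_r)/(q_o−q_s) − p_r/q_s) + N·p_o·(1 − (p_o−p_r)/(q_o−q_s)) is (p_o*, p_r*) = (2δ·q_o·(q_o−q_s)/(4δq_o − (δ+1)²q_s), q_s·(δ+1)·(q_o−q_s)/(4δq_o − (δ+1)²q_s)). -/
/-!
R1b is quadratic in each price, so both partial derivatives are affine in `(p_o, p_r)`.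
After clearing the nonzero factors `N`, `q_o - q_s` and `q_s`, stationarity becomes the linear
system `2 p_o - (δ + 1) p_r = q_o - q_s`, `(δ + 1) q_s p_o = 2 δ q_o p_r`, whose determinant
`4 δ q_o - (δ + 1)² q_s` is positive by hypothesis; Cramer's rule gives the unique solution.
-/

noncomputable def R1b (q_s q_o N δ p_o p_r : ℝ) : ℝ :=
  N * δ * p_r * ((p_o - p_r) / (q_o - q_s) - p_r / q_s)
    + N * p_o * (1 - (p_o - p_r) / (q_o - q_s))

theorem linear_system_two_iff {a b c d e f x y : ℝ} (hdet : a * d - b * c ≠ 0) :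
    (a * x + b * y = e ∧ c * x + d * y = f) ↔
      (x = (e * d - b * f) / (a * d - b * c) ∧ y = (a * f - e * c) / (a * d - b * c)) := by
  rw [eq_div_iff hdet, eq_div_iff hdet]
  constructor
  · rintro ⟨h₁, h₂⟩
    exact ⟨by linear_combination d * h₁ - b * h₂, by linear_combination a * h₂ - c * h₁⟩
  · rintro ⟨hx, hy⟩
    refine ⟨mul_right_cancel₀ hdet ?_, mul_right_cancel₀ hdet ?_⟩
    · linear_combination a * hx + b * hy
    · linear_combination c * hx + d * hy

section
variable (q_s q_o N δ p_o p_r : ℝ)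

theorem hasDerivAt_R1b_left :
    HasDerivAt (fun x => R1b q_s q_o N δ x p_r)
      (N * (1 + ((δ + 1) * p_r - 2 * p_o) / (q_o - q_s))) p_o := by
  have hlin : HasDerivAt (fun x => (x - p_r) / (q_o - q_s)) (1 / (q_o - q_s)) p_o :=
    ((hasDerivAt_id p_o).sub_const p_r).div_const _
  refine (((hlin.sub_const (p_r / q_s)).const_mul (N * δ * p_r)).add
    (((hasDerivAt_id p_o).const_mul N).mul (hlin.const_sub 1))).congr_deriv ?_
  simp only [id]
  ring

theorem hasDerivAt_R1b_right :
    HasDerivAt (fun y => R1b q_s q_o N δ p_o y)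
      (N * (((δ + 1) * p_o - 2 * δ * p_r) / (q_o - q_s) - 2 * δ * p_r / q_s)) p_r := by
  have hlin : HasDerivAt (fun y => (p_o - y) / (q_o - q_s) - y / q_s)
      (-1 / (q_o - q_s) - 1 / q_s) p_r :=
    (((hasDerivAt_id p_r).const_sub p_o).div_const _).sub ((hasDerivAt_id p_r).div_const _)
  refine (((hasDerivAt_id p_r).const_mul (N * δ)).mul hlin |>.add
    ((((hasDerivAt_id p_r).const_sub p_o).div_const (q_o - q_s)).const_sub 1
      |>.const_mul (N * p_o))).congr_deriv ?_
  simp only [id]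
  ring

variable {q_s q_o N δ p_o p_r}

theorem deriv_R1b_left_eq_zero_iff (hN : N ≠ 0) (hA : q_o - q_s ≠ 0) :
    deriv (fun x => R1b q_s q_o N δ x p_r) p_o = 0 ↔ 2 * p_o + -(δ + 1) * p_r = q_o - q_s := by
  rw [(hasDerivAt_R1b_left ..).deriv, mul_eq_zero, or_iff_right hN]
  field_simp
  constructor <;> intro h <;> linear_combination -h

theorem deriv_R1b_right_eq_zero_iff (hN : N ≠ 0) (hA : q_o - q_s ≠ 0) (hs : q_s ≠ 0) :
    deriv (fun y => R1b q_s q_o N δ p_o y) p_r = 0 ↔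
      -((δ + 1) * q_s) * p_o + 2 * δ * q_o * p_r = 0 := by
  rw [(hasDerivAt_R1b_right ..).deriv, mul_eq_zero, or_iff_right hN]
  field_simp
  constructor <;> intro h <;> linear_combination -h

end

theorem R1b_unique_stationary_point_general (q_s q_o N δ : ℝ)
    (hq : q_o > q_s) (hqs : q_s > 0) (hN : N > 0)
    (hc : (δ + 1) ^ 2 * q_s < 4 * δ * q_o) (p_o p_r : ℝ) :
    (deriv (fun x : ℝ =>
        N * δ * p_r * ((x - p_r) / (q_o - q_s) - p_r / q_s)
          + N * x * (1 - (x - p_r) / (q_o - q_s))) p_o = 0 ∧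
     deriv (fun y : ℝ =>
        N * δ * y * ((p_o - y) / (q_o - q_s) - y / q_s)
          + N * p_o * (1 - (p_o - y) / (q_o - q_s))) p_r = 0)
    ↔ (p_o = 2 * δ * q_o * (q_o - q_s) / (4 * δ * q_o - (δ + 1) ^ 2 * q_s) ∧
       p_r = q_s * (δ + 1) * (q_o - q_s) / (4 * δ * q_o - (δ + 1) ^ 2 * q_s)) := by
  have hA : q_o - q_s ≠ 0 := sub_ne_zero.2 hq.ne'
  have hdet : 2 * (2 * δ * q_o) - -(δ + 1) * -((δ + 1) * q_s)
      = 4 * δ * q_o - (δ + 1) ^ 2 * q_s := by ring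
  refine (and_congr (deriv_R1b_left_eq_zero_iff hN.ne' hA)
    (deriv_R1b_right_eq_zero_iff hN.ne' hA hqs.ne')).trans ?_
  rw [linear_system_two_iff (hdet ▸ (sub_pos.2 hc).ne'), hdet]
  congr! 3 <;> ring

/-- Under `(δ+1)²·q_s < 4·δ·q_o` with `q_o > q_s > 0` and `δ ∈ (0,1)`, the unique
stationary point of the region-R1b revenue is
`(p_o*, p_r*) = (2δq_o(q_o−q_s)/(4δq_o − (δ+1)²q_s), q_s(δ+1)(q_o−q_s)/(4δq_o − (δ+1)²q_s))`. -/
theorem R1b_unique_stationary_point (q_s q_o N δ : ℝ)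
    (hq : q_o > q_s) (hqs : q_s > 0) (hN : N > 0) (hδ : δ ∈ Set.Ioo (0:ℝ) 1)
    (hc : (δ + 1) ^ 2 * q_s < 4 * δ * q_o) (p_o p_r : ℝ) :
    (deriv (fun x : ℝ =>
        N * δ * p_r * ((x - p_r) / (q_o - q_s) - p_r / q_s)
          + N * x * (1 - (x - p_r) / (q_o - q_s))) p_o = 0 ∧
     deriv (fun y : ℝ =>
        N * δ * y * ((p_o - y) / (q_o - q_s) - y / q_s)
          + N * p_o * (1 - (p_o - y) / (q_o - q_s))) p_r = 0)
    ↔ (p_o = 2 * δ * q_o * (q_o - q_s) / (4 * δ * q_o - (δ + 1) ^ 2 * q_s) ∧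
       p_r = q_s * (δ + 1) * (q_o - q_s) / (4 * δ * q_o - (δ + 1) ^ 2 * q_s)) :=
  R1b_unique_stationary_point_general q_s q_o N δ hq hqs hN hc p_o p_r
end
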